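/- Define D : NC^B_2(2m) → NC^A_2(2m) by replacing, in each π, every negative B-pair ((−b,−a),(a,b)) (where ab < 0) by the positive B-pair ((−b,a),(−a,b)) and leaving positive B-pairs unchanged. Then D is a well-defined surjection, every negative B-pair of π is mapped to an outer B-pair of D(π), and for every π ∈ NC^A_2(2m) the fiber has cardinality #D^{−1}(π) = Σ_{i=0}^{#Out(π)} C(#Out(π), i) = 2^{#Out(π)}; moreover NC^B_2(2m) = ⊔_{π ∈ NC^A_2(2m)} D^{−1}(π). -/

import Mathlib

open scoped TensorProduct ComplexConjugate InnerProductSpace DirectSum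
open PiTensorProduct

noncomputable section

/-- Signed indices: `(i, true)` represents `i+1 ∈ {1,…,n}`, `(i, false)` represents `-(i+1)`. -/
abbrev SIdx (n : ℕ) := Fin n × Bool

/-- The reflection `k ↦ -k` on signed indices. -/
def negIdx {n : ℕ} (p : SIdx n) : SIdx n := (p.1, !p.2)

/-- The signed integer value of a signed index. -/
def sval {n : ℕ} (p : SIdx n) : ℤ := if p.2 then (p.1 : ℤ) + 1 else -((p.1 : ℤ) + 1)

/-- The hyperoctahedral group `B(n)`, realized as the group of permutations `σ` of
`[±n] = {-n,…,-1,1,…,n}` with `σ(-k) = -σ(k)`. -/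
def hyperoctahedral (n : ℕ) : Subgroup (Equiv.Perm (SIdx n)) where
  carrier := {σ | ∀ p, σ (negIdx p) = negIdx (σ p)}
  one_mem' := fun _ => rfl
  mul_mem' := by
    intro σ τ hσ hτ p
    simp only [Equiv.Perm.mul_apply, hτ p, hσ (τ p)]
  inv_mem' := by
    intro σ hσ p
    have := hσ (σ⁻¹ p)
    rw [show σ (σ⁻¹ p) = p from σ.apply_symm_apply p] at this
    have h2 : σ⁻¹ (σ (negIdx (σ⁻¹ p))) = σ⁻¹ (negIdx p) := by rw [this]
    simpa using h2.symm

instance (n : ℕ) : DecidablePred (· ∈ hyperoctahedral n) := fun σ =>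
  decidable_of_iff (∀ p, σ (negIdx p) = negIdx (σ p)) Iff.rfl

/-- `l₁(σ)`: the number of negative inversions, `#{1 ≤ i ≤ n : σ(i) < 0}`. -/
def ninv {n : ℕ} (σ : Equiv.Perm (SIdx n)) : ℕ :=
  (Finset.univ.filter fun i : Fin n => sval (σ (i, true)) < 0).card

/-- `l₂(σ)`: the number of positive inversions, i.e. the number of elements of
`R₂⁺ = {(i,j) : 1 ≤ i < j ≤ n} ∪ {(i,-j) : 1 ≤ i < j ≤ n}` (identified with the long
positive roots `e_j - e_i`, `e_i + e_j`) sent by `σ` into `R₂⁻ = -R₂⁺`. -/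
def pinv {n : ℕ} (σ : Equiv.Perm (SIdx n)) : ℕ :=
  (Finset.univ.filter fun ij : Fin n × Fin n =>
      ij.1 < ij.2 ∧ sval (σ (ij.2, true)) < sval (σ (ij.1, true))).card +
  (Finset.univ.filter fun ij : Fin n × Fin n =>
      ij.1 < ij.2 ∧ sval (σ (ij.1, true)) < sval (σ (ij.2, false))).card

variable (H : Type*) [NormedAddCommGroup H] [InnerProductSpace ℂ H]

/-- `K_n = H^{⊗2n}`, with the `2n` tensor factors indexed by `[±n]`. -/
abbrev KSp (n : ℕ) : Type _ := ⨂[ℂ] (_ : SIdx n), H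

/-- The action of a permutation of `[±n]` on `K_n`, permuting the tensor factors:
on simple tensors `(σ x)_i = x_{σ⁻¹(i)}`. -/
def permB {n : ℕ} (σ : Equiv.Perm (SIdx n)) : KSp H n ≃ₗ[ℂ] KSp H n :=
  PiTensorProduct.reindex ℂ (fun _ : SIdx n => H) σ

/-- The type-B symmetrization operator `P_{α,q}^{(n)} = ∑_{σ ∈ B(n)} α^{l₁(σ)} q^{l₂(σ)} σ`. -/
def symB (n : ℕ) (α q : ℝ) : Module.End ℂ (KSp H n) :=
  ∑ σ : hyperoctahedral n,
    (((α : ℂ) ^ ninv (σ : Equiv.Perm (SIdx n))) * ((q : ℂ) ^ pinv (σ : Equiv.Perm (SIdx n)))) •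
      (permB H (σ : Equiv.Perm (SIdx n))).toLinearMap

/-- A real structure (conjugation) on `H`: `H` is the complexification of the
real Hilbert space `H_ℝ` of its fixed points. -/
structure RealStructure where
  J : H →ₗ⋆[ℂ] H
  invol : ∀ v, J (J v) = v
  inner_map : ∀ u v, ⟪J u, J v⟫_ℂ = ⟪v, u⟫_ℂ

/-- The set `P^B_{1,2}(N)` of type-B set partitions of `[±N]` into singletons and pairs,
encoded as involutions `m` of `[±N]`: the 2-element orbits `{p, m p}` are the pair blocks and
the fixed points are the singletons.  The conditions say that `m` is an involution, that the
partition is invariant under reflection (`π̄ = π`), and that no pair block equals its own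
reflection (`V ≠ V̄`). -/
def PB12 (N : ℕ) : Finset (SIdx N → SIdx N) :=
  Finset.univ.filter fun m =>
    (∀ p, m (m p) = p) ∧ (∀ p, m (negIdx p) = negIdx (m p)) ∧ (∀ p, m p ≠ negIdx p)

/-- The set `P^B_2(N)` of type-B pair partitions of `[±N]` (no singleton blocks). -/
def PB2 (N : ℕ) : Finset (SIdx N → SIdx N) := (PB12 N).filter fun m => ∀ p, m p ≠ p

/-- `b` is the canonical representative of a B-pair `((-b,-a),(a,b))` of `m` (with
`-b < b`, `|a| < |b|`): `b` is the element of largest absolute value of the two blocks which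
is positive, and `a = m b`. -/
def isRep {N : ℕ} (m : SIdx N → SIdx N) (b : SIdx N) : Prop :=
  0 < sval b ∧ |sval (m b)| < sval b

instance {N : ℕ} (m : SIdx N → SIdx N) (b : SIdx N) : Decidable (isRep m b) :=
  decidable_of_iff (0 < sval b ∧ |sval (m b)| < sval b) Iff.rfl

/-- `Nb(π)`: the number of negative B-pairs `((-b,-a),(a,b))` of `π` (those with `a·b < 0`). -/
def NbB {N : ℕ} (m : SIdx N → SIdx N) : ℕ :=
  (Finset.univ.filter fun b : SIdx N => isRep m b ∧ sval (m b) < 0).card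

/-- `Cr(π)`: the number of crossings of B-pairs: the number of (ordered) pairs of B-pairs
`((V̄,V),(W̄,W))` with `V` crossing `W`, plus the number of (mirror-classes of) pairs of
B-pairs with `V̄` crossing `W` (pairs `(i,j)`, `(k,l)` cross when `i<k<j<l`). -/
def CrB {N : ℕ} (m : SIdx N → SIdx N) : ℕ :=
  (Finset.univ.filter fun bc : SIdx N × SIdx N =>
      isRep m bc.1 ∧ isRep m bc.2 ∧
      sval (m bc.1) < sval (m bc.2) ∧ sval (m bc.2) < sval bc.1 ∧ sval bc.1 < sval bc.2).card +
  (Finset.univ.filter fun bc : SIdx N × SIdx N =>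
      isRep m bc.1 ∧ isRep m bc.2 ∧ sval bc.1 < sval bc.2 ∧
      -sval bc.1 < sval (m bc.2) ∧ sval (m bc.2) < -sval (m bc.1) ∧
      -sval (m bc.1) < sval bc.2).card

/-- `Cs(π)`: the number of pairs (B-singleton `((-v),(v))`, covering B-pair `(W̄,W)`) such
that `W` covers `(v)`, plus the number of those such that `W` covers `(-v)`. -/
def CsB {N : ℕ} (m : SIdx N → SIdx N) : ℕ :=
  (Finset.univ.filter fun sc : SIdx N × SIdx N =>
      (m sc.1 = sc.1 ∧ 0 < sval sc.1) ∧ isRep m sc.2 ∧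
      sval (m sc.2) < sval sc.1 ∧ sval sc.1 < sval sc.2).card +
  (Finset.univ.filter fun sc : SIdx N × SIdx N =>
      (m sc.1 = sc.1 ∧ 0 < sval sc.1) ∧ isRep m sc.2 ∧
      sval (m sc.2) < -sval sc.1 ∧ -sval sc.1 < sval sc.2).card

/-- The set of outer B-pairs of `π` (represented by their canonical representatives):
B-pairs not covered by another B-pair. -/
def OutB {N : ℕ} (m : SIdx N → SIdx N) : Finset (SIdx N) :=
  Finset.univ.filter fun b : SIdx N => isRep m b ∧
    ∀ c : SIdx N, isRep m c → ¬(sval (m c) < sval (m b) ∧ sval b < sval c)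

/-- `NC^B_2(N)`: non-crossing type-B pair partitions of `[±N]`. -/
def NCB (N : ℕ) : Finset (SIdx N → SIdx N) := (PB2 N).filter fun m => CrB m = 0

/-- `NC^A_2(N)`: non-crossing type-B pair partitions all of whose B-pairs are positive. -/
def NCA (N : ℕ) : Finset (SIdx N → SIdx N) :=
  (NCB N).filter fun m => ∀ b, isRep m b → 0 < sval (m b)

/-- The map `D`: replace every negative B-pair `((-b,-a),(a,b))` (`ab < 0`) by the positive
B-pair `((-b,a),(-a,b))`, and leave positive B-pairs unchanged.  In the involution encoding
this sends `p` to `-(m p)` when `p` and `m p` have opposite signs, and to `m p` otherwise. -/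
def Dmap {N : ℕ} (m : SIdx N → SIdx N) : SIdx N → SIdx N :=
  fun p => if sval p * sval (m p) < 0 then negIdx (m p) else m p

/-!
`Dmap` keeps every block's absolute values and the canonical representatives `b` of the
B-pairs, and only makes every `m b` positive. Both kinds of crossing of `Dmap m` pull back to a
crossing of `m`, and a B-pair of `Dmap m` nesting a formerly negative pair `(|m b|, b)` would
likewise come from a crossing in `m`. Conversely, for `π ∈ NC^A_2`, re-negating the B-pairs
represented by any set `S` of outer pairs of `π` creates no crossing and is undone by `Dmap`,
while the negative pairs of any preimage are outer in `π`. So `S ↦ flipSet π S` and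
`m ↦ negSet m` are inverse bijections between subsets of `Out(π)` and the fibre over `π`.
-/

variable {N : ℕ}

@[simp] lemma negIdx_negIdx (p : SIdx N) : negIdx (negIdx p) = p := by
  simp [negIdx]

@[simp] lemma negIdx_inj {p q : SIdx N} : negIdx p = negIdx q ↔ p = q :=
  ⟨fun h => by simpa using congrArg negIdx h, congrArg negIdx⟩

lemma negIdx_eq_iff {p q : SIdx N} : negIdx p = q ↔ p = negIdx q := by
  rw [← negIdx_inj, negIdx_negIdx]

@[simp] lemma sval_negIdx (p : SIdx N) : sval (negIdx p) = -sval p := by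
  rcases p with ⟨i, _ | _⟩ <;> simp [sval, negIdx]

lemma sval_pos_iff (p : SIdx N) : 0 < sval p ↔ p.2 = true := by
  rcases p with ⟨i, _ | _⟩ <;> simp [sval]

lemma abs_sval (p : SIdx N) : |sval p| = (p.1 : ℤ) + 1 := by
  rcases p with ⟨i, _ | _⟩ <;> simp only [sval, Bool.false_eq_true, ↓reduceIte, abs_neg] <;>
    exact abs_of_nonneg (by positivity)

lemma sval_ne_zero (p : SIdx N) : sval p ≠ 0 := by
  rcases p with ⟨i, _ | _⟩ <;> simp [sval] <;> omega

lemma sval_injective : Function.Injective (sval : SIdx N → ℤ) := by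
  rintro ⟨i, _ | _⟩ ⟨j, _ | _⟩ h <;> simp [sval] at h ⊢ <;> omega

lemma eq_or_eq_negIdx_of_fst_eq {p q : SIdx N} (h : p.1 = q.1) : p = q ∨ p = negIdx q := by
  rcases p with ⟨i, _ | _⟩ <;> rcases q with ⟨j, _ | _⟩ <;> simp_all [negIdx]

def absIdx (p : SIdx N) : SIdx N := (p.1, true)

lemma absIdx_eq_or (p : SIdx N) : absIdx p = p ∨ absIdx p = negIdx p := by
  rcases p with ⟨i, _ | _⟩ <;> simp [absIdx, negIdx]

lemma isRep_iff {m : SIdx N → SIdx N} {b : SIdx N} :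
    isRep m b ↔ b.2 = true ∧ (m b).1 < b.1 := by
  rw [isRep, abs_sval, sval_pos_iff]
  refine and_congr_right fun hb => ?_
  rw [show sval b = (b.1 : ℤ) + 1 by simp [sval, hb]]
  omega

structure IsPB2 (m : SIdx N → SIdx N) : Prop where
  invol : ∀ p, m (m p) = p
  map_negIdx : ∀ p, m (negIdx p) = negIdx (m p)
  ne_negIdx : ∀ p, m p ≠ negIdx p
  ne_self : ∀ p, m p ≠ p

lemma mem_PB2_iff {m : SIdx N → SIdx N} : m ∈ PB2 N ↔ IsPB2 m := by
  simp only [PB2, PB12, Finset.mem_filter, Finset.mem_univ, true_and]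
  exact ⟨fun ⟨⟨h₁, h₂, h₃⟩, h₄⟩ => ⟨h₁, h₂, h₃, h₄⟩,
    fun h => ⟨⟨h.invol, h.map_negIdx, h.ne_negIdx⟩, h.ne_self⟩⟩

-- `(m b, b)` crosses `(m c, c)`, or its mirror `(-b, -m b)` does.
def BCross (m : SIdx N → SIdx N) (b c : SIdx N) : Prop :=
  (sval (m b) < sval (m c) ∧ sval (m c) < sval b ∧ sval b < sval c) ∨
  (sval b < sval c ∧ -sval b < sval (m c) ∧ sval (m c) < -sval (m b) ∧ -sval (m b) < sval c)

lemma CrB_eq_zero_iff {m : SIdx N → SIdx N} :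
    CrB m = 0 ↔ ∀ b c, isRep m b → isRep m c → ¬BCross m b c := by
  simp only [CrB, BCross, Nat.add_eq_zero_iff, Finset.card_eq_zero, Finset.filter_eq_empty_iff,
    Finset.mem_univ, true_implies, Prod.forall]
  grind

lemma mem_NCB_iff {m : SIdx N → SIdx N} :
    m ∈ NCB N ↔ IsPB2 m ∧ ∀ b c, isRep m b → isRep m c → ¬BCross m b c := by
  rw [NCB, Finset.mem_filter, mem_PB2_iff, CrB_eq_zero_iff]

lemma mem_NCA_iff {m : SIdx N → SIdx N} :
    m ∈ NCA N ↔ m ∈ NCB N ∧ ∀ b, isRep m b → 0 < sval (m b) :=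
  Finset.mem_filter

lemma mem_OutB_iff {m : SIdx N → SIdx N} {b : SIdx N} : b ∈ OutB m ↔
    isRep m b ∧ ∀ c, isRep m c → ¬(sval (m c) < sval (m b) ∧ sval b < sval c) := by
  simp [OutB]

/-- The representative of the B-pair containing `p`. -/
def rep (m : SIdx N → SIdx N) (p : SIdx N) : SIdx N :=
  if (m p).1 < p.1 then absIdx p else absIdx (m p)

lemma rep_eq_self {m : SIdx N → SIdx N} {b : SIdx N} (hb : isRep m b) : rep m b = b := by
  obtain ⟨hpos, hlt⟩ := isRep_iff.1 hb
  simp [rep, hlt, absIdx, ← hpos]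

namespace IsPB2

variable {m : SIdx N → SIdx N} (h : IsPB2 m)
include h

lemma fst_ne (p : SIdx N) : (m p).1 ≠ p.1 := fun he =>
  (eq_or_eq_negIdx_of_fst_eq he).elim (h.ne_self p) (h.ne_negIdx p)

lemma isRep_rep (p : SIdx N) : isRep m (rep m p) := by
  rw [isRep_iff, rep]
  split_ifs with hlt
  · refine ⟨rfl, ?_⟩
    rcases absIdx_eq_or p with he | he <;> rw [he]
    · exact hlt
    · rwa [h.map_negIdx]
  · refine ⟨rfl, ?_⟩
    have hlt' : p.1 < (m p).1 := lt_of_le_of_ne (not_lt.1 hlt) (h.fst_ne p).symm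
    rcases absIdx_eq_or (m p) with he | he <;> rw [he]
    · simpa [h.invol] using hlt'
    · rwa [h.map_negIdx, h.invol]

lemma rep_map (p : SIdx N) : rep m (m p) = rep m p := by
  have := h.fst_ne p
  unfold rep
  rw [h.invol]
  split_ifs <;> first | rfl | omega

lemma rep_negIdx (p : SIdx N) : rep m (negIdx p) = rep m p := by
  simp only [rep, h.map_negIdx]
  rfl

lemma mul_sval_rep (p : SIdx N) :
    sval (rep m p) * sval (m (rep m p)) = sval p * sval (m p) := by
  unfold rep
  split_ifs
  · rcases absIdx_eq_or p with he | he <;> rw [he]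
    simp [h.map_negIdx]
  · rcases absIdx_eq_or (m p) with he | he <;> rw [he] <;>
      simp [h.map_negIdx, h.invol, mul_comm]

end IsPB2

def twist (m : SIdx N → SIdx N) (P : SIdx N → Prop) [DecidablePred P] (p : SIdx N) : SIdx N :=
  if P p then negIdx (m p) else m p

section Twist

variable {m : SIdx N → SIdx N} {P : SIdx N → Prop} [DecidablePred P]

lemma Dmap_eq_twist (m : SIdx N → SIdx N) :
    Dmap m = twist m fun p => sval p * sval (m p) < 0 := rfl

lemma sval_twist (p : SIdx N) :
    sval (twist m P p) = if P p then -sval (m p) else sval (m p) := by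
  unfold twist; split_ifs <;> simp

lemma fst_twist (p : SIdx N) : (twist m P p).1 = (m p).1 := by
  unfold twist; split_ifs <;> rfl

lemma rep_twist : rep (twist m P) = rep m := by
  funext p
  simp only [rep, absIdx, fst_twist]

lemma isRep_twist_iff {b : SIdx N} : isRep (twist m P) b ↔ isRep m b := by
  simp only [isRep_iff, fst_twist]

lemma twist_twist {Q : SIdx N → Prop} [DecidablePred Q] (hQ : ∀ p, Q p ↔ P p) :
    twist (twist m P) Q = m := by
  funext p
  by_cases hp : P p <;> simp [twist, hQ, hp]

lemma IsPB2.twist (h : IsPB2 m) (hPm : ∀ p, P (m p) ↔ P p)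
    (hPneg : ∀ p, P (negIdx p) ↔ P p) : IsPB2 (twist m P) where
  invol p := by
    by_cases hp : P p <;> simp [_root_.twist, hp, hPm, hPneg, h.map_negIdx, h.invol]
  map_negIdx p := by
    by_cases hp : P p <;> simp [_root_.twist, hp, hPneg, h.map_negIdx]
  ne_negIdx p := by
    by_cases hp : P p <;> simp [_root_.twist, hp, h.ne_negIdx, h.ne_self]
  ne_self p := by
    by_cases hp : P p <;> simp [_root_.twist, hp, negIdx_eq_iff, h.ne_negIdx, h.ne_self]

end Twist

section Dmap

variable {m : SIdx N → SIdx N}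

lemma IsPB2.Dmap (h : IsPB2 m) : IsPB2 (Dmap m) := by
  rw [Dmap_eq_twist]
  refine h.twist (fun p => ?_) (fun p => ?_)
  · rw [h.invol, mul_comm]
  · rw [h.map_negIdx, sval_negIdx, sval_negIdx, neg_mul_neg]

lemma isRep_Dmap_iff {b : SIdx N} : isRep (Dmap m) b ↔ isRep m b := by
  rw [Dmap_eq_twist, isRep_twist_iff]

lemma sval_Dmap_of_pos {b : SIdx N} (hb : 0 < sval b) : sval (Dmap m b) = |sval (m b)| := by
  rw [Dmap_eq_twist, sval_twist]
  rcases lt_or_gt_of_ne (sval_ne_zero (m b)) with hneg | hpos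
  · rw [if_pos (mul_neg_of_pos_of_neg hb hneg), abs_of_neg hneg]
  · rw [if_neg (mul_pos hb hpos).not_gt, abs_of_pos hpos]

lemma Dmap_mem_NCA (hm : m ∈ NCB N) : Dmap m ∈ NCA N := by
  obtain ⟨h, hcross⟩ := mem_NCB_iff.1 hm
  refine mem_NCA_iff.2 ⟨mem_NCB_iff.2 ⟨h.Dmap, fun b c hb hc => ?_⟩, fun b hb => ?_⟩
  · rw [isRep_Dmap_iff] at hb hc
    have hnc := hcross b c hb hc
    obtain ⟨hb₀, hb₁⟩ := hb
    obtain ⟨hc₀, hc₁⟩ := hc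
    unfold BCross at hnc ⊢
    rw [sval_Dmap_of_pos hb₀, sval_Dmap_of_pos hc₀]
    rcases abs_cases (sval (m b)) with ⟨e, e'⟩ | ⟨e, e'⟩ <;>
      rcases abs_cases (sval (m c)) with ⟨f, f'⟩ | ⟨f, f'⟩ <;> omega
  · rw [isRep_Dmap_iff] at hb
    rw [sval_Dmap_of_pos hb.1]
    exact abs_pos.2 (sval_ne_zero _)

lemma mem_OutB_Dmap (hm : m ∈ NCB N) {b : SIdx N} (hb : isRep m b) (hneg : sval (m b) < 0) :
    b ∈ OutB (Dmap m) := by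
  have hcross := (mem_NCB_iff.1 hm).2
  refine mem_OutB_iff.2 ⟨isRep_Dmap_iff.2 hb, fun c hc => ?_⟩
  rw [isRep_Dmap_iff] at hc
  have hnc := hcross b c hb hc
  obtain ⟨hb₀, hb₁⟩ := hb
  obtain ⟨hc₀, hc₁⟩ := hc
  unfold BCross at hnc
  rw [sval_Dmap_of_pos hb₀, sval_Dmap_of_pos hc₀]
  rcases abs_cases (sval (m b)) with ⟨e, e'⟩ | ⟨e, e'⟩ <;>
    rcases abs_cases (sval (m c)) with ⟨f, f'⟩ | ⟨f, f'⟩ <;> omega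

end Dmap

section Fiber

variable {π : SIdx N → SIdx N}

lemma mul_sval_pos_of_mem_NCA (hπ : π ∈ NCA N) (p : SIdx N) : 0 < sval p * sval (π p) := by
  obtain ⟨hπB, hpos⟩ := mem_NCA_iff.1 hπ
  have h := (mem_NCB_iff.1 hπB).1
  have hr := h.isRep_rep p
  rw [← h.mul_sval_rep p]
  exact mul_pos hr.1 (hpos _ hr)

lemma Dmap_eq_self (hπ : π ∈ NCA N) : Dmap π = π :=
  funext fun p => if_neg (mul_sval_pos_of_mem_NCA hπ p).not_gt

def flipSet (π : SIdx N → SIdx N) (S : Finset (SIdx N)) : SIdx N → SIdx N :=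
  twist π fun p => rep π p ∈ S

lemma IsPB2.flipSet (h : IsPB2 π) (S : Finset (SIdx N)) : IsPB2 (flipSet π S) :=
  h.twist (fun p => by rw [h.rep_map]) (fun p => by rw [h.rep_negIdx])

lemma isRep_flipSet_iff {S : Finset (SIdx N)} {b : SIdx N} :
    isRep (flipSet π S) b ↔ isRep π b :=
  isRep_twist_iff

lemma sval_flipSet_of_isRep {S : Finset (SIdx N)} {b : SIdx N} (hb : isRep π b) :
    sval (flipSet π S b) = if b ∈ S then -sval (π b) else sval (π b) := by
  rw [flipSet, sval_twist, rep_eq_self hb]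

lemma Dmap_flipSet (hπ : π ∈ NCA N) (S : Finset (SIdx N)) : Dmap (flipSet π S) = π := by
  rw [Dmap_eq_twist, flipSet]
  refine twist_twist fun p => ?_
  have := mul_sval_pos_of_mem_NCA hπ p
  rw [sval_twist]
  split_ifs with hp <;> simp only [hp, iff_true, iff_false, not_lt] <;> nlinarith

-- `(π b, b)` is neither nested in nor crossed by `(π c, c)`, so it lies to its left.
lemma sval_lt_of_mem_OutB (hπ : π ∈ NCB N) {b c : SIdx N} (hb : b ∈ OutB π) (hc : isRep π c)
    (hbc : sval b < sval c) : sval b < sval (π c) := by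
  obtain ⟨h, hcross⟩ := mem_NCB_iff.1 hπ
  obtain ⟨hb, hbOut⟩ := mem_OutB_iff.1 hb
  have hne₁ : sval (π c) ≠ sval (π b) := fun e => by
    have hcb : c = b := by rw [← h.invol c, sval_injective e, h.invol]
    exact hbc.ne (congrArg sval hcb).symm
  have hne₂ : sval (π c) ≠ sval b := fun e => by
    have hcb : π b = c := by rw [← sval_injective e, h.invol]
    have := (abs_lt.1 hb.2).2
    rw [hcb] at this
    omega
  have hnc := hcross b c hb hc
  have hnest := hbOut c hc
  have := abs_lt.1 hb.2
  unfold BCross at hnc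
  omega

lemma flipSet_mem_NCB (hπ : π ∈ NCA N) {S : Finset (SIdx N)} (hS : S ⊆ OutB π) :
    flipSet π S ∈ NCB N := by
  obtain ⟨hπB, hpos⟩ := mem_NCA_iff.1 hπ
  obtain ⟨h, hcross⟩ := mem_NCB_iff.1 hπB
  refine mem_NCB_iff.2 ⟨h.flipSet S, fun b c hb hc => ?_⟩
  rw [isRep_flipSet_iff] at hb hc
  have hout : b ∈ S → sval b < sval c → sval b < sval (π c) := fun hbS =>
    sval_lt_of_mem_OutB hπB (hS hbS) hc
  have hnc := hcross b c hb hc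
  have := hpos b hb
  have := hpos c hc
  have := abs_lt.1 hb.2
  have := abs_lt.1 hc.2
  unfold BCross at hnc ⊢
  rw [sval_flipSet_of_isRep hb, sval_flipSet_of_isRep hc]
  by_cases hbS : b ∈ S <;> by_cases hcS : c ∈ S <;>
    simp only [hbS, hcS, if_true, if_false, true_implies, IsEmpty.forall_iff] at hout ⊢ <;> omega

def negSet (m : SIdx N → SIdx N) : Finset (SIdx N) :=
  Finset.univ.filter fun b => isRep m b ∧ sval (m b) < 0

lemma mem_negSet_iff {m : SIdx N → SIdx N} {b : SIdx N} :
    b ∈ negSet m ↔ isRep m b ∧ sval (m b) < 0 := by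
  simp [negSet]

lemma negSet_subset_OutB {m : SIdx N → SIdx N} (hm : m ∈ NCB N) : negSet m ⊆ OutB (Dmap m) :=
  fun _ hb => mem_OutB_Dmap hm (mem_negSet_iff.1 hb).1 (mem_negSet_iff.1 hb).2

lemma negSet_flipSet (hπ : π ∈ NCA N) {S : Finset (SIdx N)} (hS : S ⊆ OutB π) :
    negSet (flipSet π S) = S := by
  ext b
  rw [mem_negSet_iff, isRep_flipSet_iff]
  constructor
  · rintro ⟨hb, hneg⟩
    rw [sval_flipSet_of_isRep hb] at hneg
    have := (mem_NCA_iff.1 hπ).2 b hb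
    by_contra hbS
    rw [if_neg hbS] at hneg
    omega
  · intro hbS
    have hb := (mem_OutB_iff.1 (hS hbS)).1
    have := (mem_NCA_iff.1 hπ).2 b hb
    rw [sval_flipSet_of_isRep hb, if_pos hbS]
    exact ⟨hb, by omega⟩

lemma flipSet_Dmap_negSet {m : SIdx N → SIdx N} (hm : m ∈ NCB N) :
    flipSet (Dmap m) (negSet m) = m := by
  have h := (mem_NCB_iff.1 hm).1
  rw [flipSet, Dmap_eq_twist, rep_twist]
  refine twist_twist fun p => ?_
  have hr := h.isRep_rep p
  rw [mem_negSet_iff, ← h.mul_sval_rep p, and_iff_right hr]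
  exact ⟨mul_neg_of_pos_of_neg hr.1, fun hp => by nlinarith [hr.1]⟩

lemma card_fiber_Dmap (hπ : π ∈ NCA N) :
    ((NCB N).filter fun m => Dmap m = π).card = 2 ^ (OutB π).card := by
  rw [← Finset.card_powerset]
  refine (Finset.card_bij' (fun S _ => flipSet π S) (fun m _ => negSet m) ?_ ?_ ?_ ?_).symm
  · intro S hS
    rw [Finset.mem_powerset] at hS
    exact Finset.mem_filter.2 ⟨flipSet_mem_NCB hπ hS, Dmap_flipSet hπ S⟩
  · intro m hm
    rw [Finset.mem_filter] at hm
    rw [Finset.mem_powerset, ← hm.2]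
    exact negSet_subset_OutB hm.1
  · intro S hS
    exact negSet_flipSet hπ (Finset.mem_powerset.1 hS)
  · intro m hm
    rw [Finset.mem_filter] at hm
    conv_rhs => rw [← flipSet_Dmap_negSet hm.1, hm.2]

end Fiber

/-- `D : NC^B_2(2n) → NC^A_2(2n)` is a well-defined surjection, every
negative B-pair of `π` is mapped to an outer B-pair of `D(π)`, each fiber has cardinality
`#D⁻¹(π) = ∑_{i=0}^{#Out(π)} C(#Out(π), i) = 2^{#Out(π)}`, and `NC^B_2(2n)` is the disjoint
union of the fibers. -/
theorem Dmap_properties (n : ℕ) :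
    (∀ m ∈ NCB (2 * n), Dmap m ∈ NCA (2 * n)) ∧
    (∀ π ∈ NCA (2 * n), ∃ m ∈ NCB (2 * n), Dmap m = π) ∧
    (∀ m ∈ NCB (2 * n), ∀ b : SIdx (2 * n),
      isRep m b → sval (m b) < 0 → b ∈ OutB (Dmap m)) ∧
    (∀ π ∈ NCA (2 * n),
      ((NCB (2 * n)).filter fun m => Dmap m = π).card = 2 ^ (OutB π).card ∧
      ((NCB (2 * n)).filter fun m => Dmap m = π).card =
        ∑ i ∈ Finset.range ((OutB π).card + 1), ((OutB π).card).choose i) ∧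
    NCB (2 * n) = (NCA (2 * n)).biUnion
      (fun π => (NCB (2 * n)).filter fun m => Dmap m = π) := by
  refine ⟨fun _ => Dmap_mem_NCA, fun π hπ => ⟨π, (mem_NCA_iff.1 hπ).1, Dmap_eq_self hπ⟩,
    fun m hm b => mem_OutB_Dmap hm, fun π hπ => ?_, ?_⟩
  · rw [card_fiber_Dmap hπ, Nat.sum_range_choose]
    exact ⟨rfl, rfl⟩
  · ext m
    simp only [Finset.mem_biUnion, Finset.mem_filter]
    exact ⟨fun hm => ⟨Dmap m, Dmap_mem_NCA hm, hm, rfl⟩, fun ⟨_, _, hm, _⟩ => hm⟩
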